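/- The theta graph Θ(2,3,5) is of QE class. -/

import Mathlib

/-- Vertex set of the theta graph `Θ(α,β,γ)`: the interior vertices of the three
paths, plus the two common endpoints (`Sum.inr false` = start, `Sum.inr true` = end). -/
abbrev ThetaV (α β γ : ℕ) : Type :=
  (Fin (α - 1) ⊕ Fin (β - 1) ⊕ Fin (γ - 1)) ⊕ Bool

/-- The position of a vertex along branch `b` (if the vertex lies on that branch). -/
def onBranch (α β γ : ℕ) (v : ThetaV α β γ) (b : Fin 3) : Option ℕ :=
  match v with
  | Sum.inr false => some 0
  | Sum.inr true => some (if b = 0 then α else if b = 1 then β else γ)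
  | Sum.inl (Sum.inl i) => if b = 0 then some (i.1 + 1) else none
  | Sum.inl (Sum.inr (Sum.inl j)) => if b = 1 then some (j.1 + 1) else none
  | Sum.inl (Sum.inr (Sum.inr m)) => if b = 2 then some (m.1 + 1) else none

/-- The theta graph `Θ(α,β,γ)`: union of three paths of lengths `α`, `β`, `γ`
with common endpoints. Two vertices are adjacent iff they lie on a common branch
at consecutive positions. -/
def thetaGraph (α β γ : ℕ) : SimpleGraph (ThetaV α β γ) where
  Adj u v := u ≠ v ∧ ∃ b p q, onBranch α β γ u b = some p ∧
      onBranch α β γ v b = some q ∧ (p + 1 = q ∨ q + 1 = p)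
  symm := by
    refine ⟨?_⟩
    rintro u v ⟨hne, b, p, q, hu, hv, h⟩
    exact ⟨hne.symm, b, q, p, hv, hu, h.symm⟩
  loopless := by refine ⟨?_⟩; rintro u ⟨hne, -⟩; exact hne rfl

/-- A finite graph is of QE class if it admits a quadratic embedding into
Euclidean space: `‖φ x - φ y‖² = d_G(x,y)` for all vertices `x, y`. -/
def IsQEClass {V : Type*} [Fintype V] (G : SimpleGraph V) : Prop :=
  ∃ φ : V → EuclideanSpace ℝ (Fin (Fintype.card V)),
    ∀ x y : V, ‖φ x - φ y‖ ^ 2 = (G.dist x y : ℝ)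

/-! ### Auxiliary material for `theta_235_qe` -/

namespace Theta235Aux

/-- Auxiliary relation on options, packaging the branch condition of `thetaGraph`. -/
def rel (o₁ o₂ : Option ℕ) : Prop :=
  ∃ p q, o₁ = some p ∧ o₂ = some q ∧ (p + 1 = q ∨ q + 1 = p)

instance : ∀ o₁ o₂, Decidable (rel o₁ o₂)
  | some p, some q => decidable_of_iff (p + 1 = q ∨ q + 1 = p) (by simp [rel])
  | none, _ => isFalse (by simp [rel])
  | some _, none => isFalse (by simp [rel])

/-- Enumeration of the nine vertices of `Θ(2,3,5)`. -/
def idx : ThetaV 2 3 5 → Fin 9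
  | Sum.inr false => 0
  | Sum.inr true => 1
  | Sum.inl (Sum.inl _) => 2
  | Sum.inl (Sum.inr (Sum.inl j)) => ⟨3 + j.1, by have := j.2; omega⟩
  | Sum.inl (Sum.inr (Sum.inr m)) => ⟨5 + m.1, by have := m.2; omega⟩

/-- The distance matrix of `Θ(2,3,5)`. -/
def D : Fin 9 → Fin 9 → ℕ :=
  ![![0,2,1,1,2,1,2,3,3],
    ![2,0,1,2,1,3,3,2,1],
    ![1,1,0,2,2,2,3,3,2],
    ![1,2,2,0,1,2,3,4,3],
    ![2,1,2,1,0,3,4,3,2],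
    ![1,3,2,2,3,0,1,2,3],
    ![2,3,3,3,4,1,0,1,2],
    ![3,2,3,4,3,2,1,0,1],
    ![3,1,2,3,2,3,2,1,0]]

/-- Candidate distance function on the vertices. -/
def f (x y : ThetaV 2 3 5) : ℕ := D (idx x) (idx y)

theorem adj_iff_spec (u v : ThetaV 2 3 5) : (thetaGraph 2 3 5).Adj u v ↔
    u ≠ v ∧ ∃ b : Fin 3, rel (onBranch 2 3 5 u b) (onBranch 2 3 5 v b) := Iff.rfl

instance : DecidableRel (thetaGraph 2 3 5).Adj :=
  fun u v => decidable_of_iff _ (adj_iff_spec u v).symm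

theorem f_self : ∀ x : ThetaV 2 3 5, f x x = 0 := by decide

theorem f_eq_zero : ∀ x y : ThetaV 2 3 5, f x y = 0 → x = y := by decide

theorem f_step : ∀ x y : ThetaV 2 3 5, x ≠ y →
    ∃ z, (thetaGraph 2 3 5).Adj z y ∧ f x z + 1 = f x y := by decide

theorem f_adj_le : ∀ x z : ThetaV 2 3 5, (thetaGraph 2 3 5).Adj x z →
    ∀ y, f x y ≤ f z y + 1 := by decide

/-- Upper bound: reachability together with `dist ≤ f`. -/
theorem reach_and_le :
    ∀ (n : ℕ) (x y : ThetaV 2 3 5), f x y ≤ n →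
      (thetaGraph 2 3 5).Reachable x y ∧ (thetaGraph 2 3 5).dist x y ≤ f x y := by
  intro n
  induction n with
  | zero =>
    intro x y h
    have hxy : x = y := f_eq_zero x y (Nat.le_zero.mp h)
    subst hxy
    exact ⟨SimpleGraph.Reachable.refl _, by simp [SimpleGraph.dist_self]⟩
  | succ n ih =>
    intro x y h
    by_cases hxy : x = y
    · subst hxy
      exact ⟨SimpleGraph.Reachable.refl _, by simp [SimpleGraph.dist_self]⟩
    · obtain ⟨z, hadj, hz⟩ := f_step x y hxy
      have hle : f x z ≤ n := by omega
      obtain ⟨hreach, hdist⟩ := ih x z hle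
      obtain ⟨p, hp⟩ := hreach.exists_walk_length_eq_dist
      refine ⟨hreach.trans hadj.reachable, ?_⟩
      have hlen : ((p.concat hadj).length) = p.length + 1 :=
        SimpleGraph.Walk.length_concat _ _
      have := SimpleGraph.dist_le (p.concat hadj)
      omega

/-- Lower bound: `f` is at most the length of any walk. -/
theorem f_le_length : ∀ {x y : ThetaV 2 3 5} (w : (thetaGraph 2 3 5).Walk x y),
    f x y ≤ w.length := by
  intro x y w
  induction w with
  | nil => simp [f_self]
  | cons h p ih =>
    rw [SimpleGraph.Walk.length_cons]
    exact le_trans (f_adj_le _ _ h _) (Nat.add_le_add_right ih 1)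

/-- The graph distance of `Θ(2,3,5)` equals the tabulated function `f`. -/
theorem dist_eq (x y : ThetaV 2 3 5) : (thetaGraph 2 3 5).dist x y = f x y := by
  obtain ⟨hreach, hle⟩ := reach_and_le (f x y) x y le_rfl
  obtain ⟨p, hp⟩ := hreach.exists_walk_length_eq_dist
  have := f_le_length p
  omega

/-- Scaled (integral) coordinates of the quadratic embedding: `60` times the
Cholesky factor of the Gram matrix. -/
def cz : Fin 9 → Fin 9 → ℤ :=
  ![![0,0,0,0,0,0,0,0,0],
    ![0,60,0,0,0,0,0,0,0],
    ![0,30,60,0,0,0,0,0,0],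
    ![0,15,-30,60,0,0,0,0,0],
    ![0,45,-30,40,60,0,0,0,0],
    ![0,0,0,0,0,60,0,0,0],
    ![0,15,-30,-20,-48,60,60,0,0],
    ![0,45,-30,-40,12,60,60,60,0],
    ![0,60,0,0,0,30,75,0,60]]

/-- Scaled diagonal weights: `120` times the Cholesky diagonal. -/
def ddz : Fin 9 → ℤ := ![0, 240, 60, 90, 50, 120, 48, 0, 15]

theorem ddz_nonneg : ∀ i, 0 ≤ ddz i := by decide

theorem sum_eq_int : ∀ i j : Fin 9,
    (∑ k, (cz i k - cz j k) ^ 2 * ddz k) = 432000 * (D i j : ℤ) := by decide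

/-- The quadratic embedding of `Θ(2,3,5)` into `ℝ⁹`. -/
noncomputable def φ (v : ThetaV 2 3 5) : EuclideanSpace ℝ (Fin 9) :=
  WithLp.toLp 2 fun i => (cz (idx v) i : ℝ) / 60 * Real.sqrt ((ddz i : ℝ) / 120)

theorem norm_sq (x y : ThetaV 2 3 5) :
    ‖φ x - φ y‖ ^ 2 = (D (idx x) (idx y) : ℝ) := by
  have hzr : (∑ k, ((cz (idx x) k : ℝ) - (cz (idx y) k : ℝ)) ^ 2 * (ddz k : ℝ))
      = 432000 * (D (idx x) (idx y) : ℝ) := by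
    exact_mod_cast sum_eq_int (idx x) (idx y)
  rw [EuclideanSpace.norm_eq,
    Real.sq_sqrt (Finset.sum_nonneg fun i _ => sq_nonneg _)]
  have key : ∀ i : Fin 9, ‖(φ x - φ y) i‖ ^ 2
      = ((cz (idx x) i : ℝ) - (cz (idx y) i : ℝ)) ^ 2 * (ddz i : ℝ) / 432000 := by
    intro i
    have hd : (0:ℝ) ≤ (ddz i : ℝ) / 120 := by
      have : (0:ℝ) ≤ (ddz i : ℝ) := by exact_mod_cast ddz_nonneg i
      positivity
    have hsub : (φ x - φ y) i
        = ((cz (idx x) i : ℝ) - (cz (idx y) i : ℝ)) / 60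
            * Real.sqrt ((ddz i : ℝ) / 120) := by
      simp only [φ, PiLp.sub_apply, PiLp.toLp_apply]
      ring
    rw [hsub, Real.norm_eq_abs, sq_abs, mul_pow, Real.sq_sqrt hd]
    ring
  rw [Finset.sum_congr rfl fun i _ => key i, ← Finset.sum_div, hzr]
  norm_num

theorem card_eq : Fintype.card (ThetaV 2 3 5) = 9 := rfl

end Theta235Aux

/-- The theta graph `Θ(2,3,5)` is of QE class. -/
theorem theta_235_qe : IsQEClass (thetaGraph 2 3 5) := by
  refine ⟨Theta235Aux.φ, fun x y => ?_⟩
  rw [Theta235Aux.dist_eq x y]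
  exact Theta235Aux.norm_sq x y
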